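/- arXiv:1009.5034 — 2 statements merged into one kernel-verified Lean document; each statement's English description precedes it below -/
import Mathlib

section
/- Let n ≥ 2 and fix an index r ∈ {1,…,n}. The subspace A = {x ∈ [0,1]^n : x_r = 0, or x_i = 1 for some i ∈ {1,…,n}} of the cube [0,1]^n is contractible. -/
/-- **Statement 9.** Let `n ≥ 2` and fix an index `r`.  The subspace
`A = {x ∈ [0,1]^n : x_r = 0, or x_i = 1 for some i}` of the cube `[0,1]^n`
is contractible. -/
theorem cube_face_union_contractible (n : ℕ) (hn : 2 ≤ n) (r : Fin n) :
    ContractibleSpace {x : Fin n → unitInterval // x r = 0 ∨ ∃ i, x i = 1} := by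
  rw [contractible_iff_id_nullhomotopic]
  set X := {x : Fin n → unitInterval // x r = 0 ∨ ∃ i, x i = 1} with hX
  -- pick an index s ≠ r
  obtain ⟨s, hs⟩ : ∃ s : Fin n, s ≠ r := by
    by_cases h : r = ⟨0, by omega⟩
    · exact ⟨⟨1, by omega⟩, by rw [h]; exact fun hc => by simpa using Fin.val_eq_of_eq hc⟩
    · exact ⟨⟨0, by omega⟩, fun hc => h hc.symm⟩
  -- the real-valued homotopy formula
  set g : ℝ → (Fin n → ℝ) → Fin n → ℝ :=
    fun t x i => if i = s then max (x i) (min (2*t) 1)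
      else x i * (1 - max (2*t-1) 0) + max (2*t-1) 0 with hg
  have hmem : ∀ (t : unitInterval) (x : X) (i : Fin n),
      g t (fun j => ((x.1 j : ℝ))) i ∈ Set.Icc (0:ℝ) 1 := by
    intro t x i
    have ht0 : (0:ℝ) ≤ t := t.2.1
    have ht1 : (t:ℝ) ≤ 1 := t.2.2
    have hx0 : (0:ℝ) ≤ x.1 i := (x.1 i).2.1
    have hx1 : ((x.1 i : ℝ)) ≤ 1 := (x.1 i).2.2
    simp only [hg]
    split_ifs with h
    · constructor
      · exact le_max_of_le_left hx0
      · exact max_le hx1 (min_le_right _ _)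
    · have ha0 : (0:ℝ) ≤ max (2*(t:ℝ)-1) 0 := le_max_right _ _
      have ha1 : max (2*(t:ℝ)-1) 0 ≤ 1 := by
        apply max_le _ zero_le_one; linarith
      constructor
      · have : (0:ℝ) ≤ x.1 i * (1 - max (2*(t:ℝ)-1) 0) := by
          apply mul_nonneg hx0; linarith
        linarith
      · nlinarith [mul_le_one₀ hx1 (by linarith : (0:ℝ) ≤ 1 - max (2*(t:ℝ)-1) 0)
          (by linarith : (1:ℝ) - max (2*(t:ℝ)-1) 0 ≤ 1)]
  -- the homotopy as a map into the subtype
  have hA : ∀ (t : unitInterval) (x : X),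
      (fun i => (⟨g t (fun j => ((x.1 j : ℝ))) i, hmem t x i⟩ : unitInterval)) r = 0 ∨
      ∃ i, (fun i => (⟨g t (fun j => ((x.1 j : ℝ))) i, hmem t x i⟩ : unitInterval)) i = 1 := by
    intro t x
    rcases x.2 with h0 | ⟨i, hi⟩
    · rcases le_or_gt (t:ℝ) (1/2) with hle | hgt
      · left
        have hr0 : ((x.1 r : ℝ)) = 0 := by rw [h0]; rfl
        have : g t (fun j => ((x.1 j : ℝ))) r = 0 := by
          simp only [hg]
          rw [if_neg (Ne.symm hs)]
          have : max (2*(t:ℝ)-1) 0 = 0 := by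
            apply max_eq_right; linarith
          rw [hr0, this]; ring
        exact Subtype.ext this
      · right
        refine ⟨s, Subtype.ext ?_⟩
        have : g t (fun j => ((x.1 j : ℝ))) s = 1 := by
          simp only [hg, if_pos rfl]
          have hmin : min (2*(t:ℝ)) 1 = 1 := by
            apply min_eq_right; linarith
          rw [hmin]
          exact max_eq_right (x.1 s).2.2
        exact this
    · right
      refine ⟨i, Subtype.ext ?_⟩
      have hi1 : ((x.1 i : ℝ)) = 1 := by rw [hi]; rfl
      have h1 : ((1:unitInterval):ℝ) = 1 := rfl
      rw [h1]
      simp only [hg]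
      split_ifs with h
      · rw [hi1]
        exact max_eq_left (min_le_right _ _)
      · rw [hi1]; ring
  have hcont : Continuous (fun p : unitInterval × X =>
      (fun i => (⟨g p.1 (fun j => ((p.2.1 j : ℝ))) i, hmem p.1 p.2 i⟩ : unitInterval))) := by
    apply continuous_pi
    intro i
    apply Continuous.subtype_mk
    have hct : Continuous (fun p : unitInterval × X => (p.1 : ℝ)) :=
      continuous_subtype_val.comp continuous_fst
    have hcx : ∀ j, Continuous (fun p : unitInterval × X => ((p.2.1 j : ℝ))) := by
      intro j
      exact continuous_subtype_val.comp
        (((continuous_apply j).comp continuous_subtype_val).comp continuous_snd)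
    simp only [hg]
    split_ifs with h
    · exact ((hcx i)).max ((continuous_const.mul hct).min continuous_const)
    · exact ((hcx i).mul (continuous_const.sub
        (((continuous_const.mul hct).sub continuous_const).max continuous_const))).add
        (((continuous_const.mul hct).sub continuous_const).max continuous_const)
  -- the endpoint: all-ones point
  refine ⟨⟨fun _ => 1, Or.inr ⟨r, rfl⟩⟩, ⟨?_⟩⟩
  refine
    { toContinuousMap := ⟨fun p => ⟨fun i => ⟨g p.1 (fun j => ((p.2.1 j : ℝ))) i, hmem p.1 p.2 i⟩,
        hA p.1 p.2⟩, hcont.subtype_mk _⟩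
      map_zero_left := ?_
      map_one_left := ?_ }
  · intro x
    apply Subtype.ext
    funext i
    apply Subtype.ext
    simp only [hg]
    show (if i = s then max ((x.1 i : ℝ)) (min (2*((0:unitInterval):ℝ)) 1)
      else (x.1 i : ℝ) * (1 - max (2*((0:unitInterval):ℝ)-1) 0) + max (2*((0:unitInterval):ℝ)-1) 0)
      = ((x.1 i : ℝ))
    rw [show ((0:unitInterval):ℝ) = 0 from rfl]
    have h1 : min (2*(0:ℝ)) 1 = 0 := by norm_num
    have h2 : max (2*(0:ℝ)-1) 0 = 0 := by norm_num
    split_ifs with h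
    · rw [h1]; exact max_eq_left (x.1 i).2.1
    · rw [h2]; ring
  · intro x
    apply Subtype.ext
    funext i
    apply Subtype.ext
    show (if i = s then max ((x.1 i : ℝ)) (min (2*((1:unitInterval):ℝ)) 1)
      else (x.1 i : ℝ) * (1 - max (2*((1:unitInterval):ℝ)-1) 0) + max (2*((1:unitInterval):ℝ)-1) 0)
      = 1
    rw [show ((1:unitInterval):ℝ) = 1 from rfl]
    have h1 : min (2*(1:ℝ)) 1 = 1 := by norm_num
    have h2 : max (2*(1:ℝ)-1) 0 = 1 := by norm_num
    split_ifs with h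
    · rw [h1]; exact max_eq_right (x.1 i).2.2
    · rw [h2]; ring
end

section
/- Let n ≥ 2, fix r ∈ {1,…,n}, and let A = {x ∈ [0,1]^n : x_r = 0, or x_i = 1 for some i ∈ {1,…,n}}. Then the quotient space [0,1]^n / A, obtained by collapsing A to a single point, is contractible. -/
/-!
Pick a coordinate `j ≠ r` and raise it to `1` over time: `x ↦ x[j := max (x j) t]`.
This deforms the cube into `A` and maps `A` into itself at every time (coordinates only grow,
and the `r`-th one is untouched), so it descends to a contraction of the cube with `A`
collapsed to a point.
-/

open unitInterval Topology

section LiftProdRight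

variable {X Y Z : Type*} [TopologicalSpace X] [TopologicalSpace Y] [TopologicalSpace Z]
  [LocallyCompactSpace Y] {r : X → X → Prop}

/-- Local compactness of `Y` makes `Y × Quot r` a quotient of `Y × X`. -/
def ContinuousMap.liftProdRight (g : C(Y × X, Z))
    (hg : ∀ y x x', r x x' → g (y, x) = g (y, x')) : C(Y × Quot r, Z) where
  toFun p := Quot.lift (fun x => g (p.1, x)) (hg p.1) p.2
  continuous_toFun := isQuotientMap_quot_mk.continuous_lift_prod_right g.continuous

end LiftProdRight

section Collapse

variable {X : Type*} [TopologicalSpace X]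

def collapseRel (A : Set X) (x y : X) : Prop :=
  x = y ∨ (x ∈ A ∧ y ∈ A)

theorem contractibleSpace_quot_collapseRel [Nonempty X] {A : Set X} (H : C(I × X, X))
    (h_zero : ∀ x, H (0, x) = x) (h_one : ∀ x, H (1, x) ∈ A)
    (h_mapsTo : ∀ t, ∀ x ∈ A, H (t, x) ∈ A) :
    ContractibleSpace (Quot (collapseRel A)) := by
  let q : C(X, Quot (collapseRel A)) := ⟨Quot.mk _, continuous_quot_mk⟩
  have h_resp : ∀ t x y, collapseRel A x y → (q.comp H) (t, x) = (q.comp H) (t, y) := by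
    rintro t x y (rfl | ⟨hx, hy⟩)
    · rfl
    · exact Quot.sound (Or.inr ⟨h_mapsTo t x hx, h_mapsTo t y hy⟩)
  obtain ⟨x₀⟩ := ‹Nonempty X›
  refine (contractible_iff_id_nullhomotopic _).2
    ⟨q (H (1, x₀)), ⟨⟨(q.comp H).liftProdRight h_resp, ?_, ?_⟩⟩⟩
  · rintro ⟨x⟩
    exact congrArg q (h_zero x)
  · rintro ⟨x⟩
    exact Quot.sound (Or.inr ⟨h_one x, h_one x₀⟩)

end Collapse

section RaiseCoord

variable {ι : Type*} [DecidableEq ι]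

def raiseCoord (j : ι) : C(I × (ι → I), ι → I) where
  toFun p := Function.update p.2 j (max (p.2 j) p.1)
  continuous_toFun :=
    continuous_snd.update j (((continuous_apply j).comp continuous_snd).max continuous_fst)

theorem raiseCoord_zero (j : ι) (x : ι → I) : raiseCoord j (0, x) = x := by
  simp [raiseCoord]

theorem raiseCoord_one_apply_self (j : ι) (x : ι → I) : raiseCoord j (1, x) j = 1 := by
  simp [raiseCoord, max_eq_right le_one']

theorem raiseCoord_apply_of_ne {i j : ι} (h : i ≠ j) (t : I) (x : ι → I) :
    raiseCoord j (t, x) i = x i := by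
  simp [raiseCoord, h]

theorem le_raiseCoord (j : ι) (t : I) (x : ι → I) : x ≤ raiseCoord j (t, x) := by
  intro i
  rcases eq_or_ne i j with rfl | h
  · simp [raiseCoord]
  · rw [raiseCoord_apply_of_ne h]

end RaiseCoord

/-- **Statement 10.** Let `n ≥ 2`, fix `r`, and let
`A = {x ∈ [0,1]^n : x_r = 0, or x_i = 1 for some i}`.  Then the quotient space
`[0,1]^n / A`, obtained by collapsing `A` to a single point (with the quotient
topology), is contractible. -/
theorem cube_quotient_contractible (n : ℕ) (hn : 2 ≤ n) (r : Fin n) :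
    ContractibleSpace (Quot fun x y : Fin n → unitInterval =>
      x = y ∨ ((x r = 0 ∨ ∃ i, x i = 1) ∧ (y r = 0 ∨ ∃ i, y i = 1))) := by
  have : Nontrivial (Fin n) := Fin.nontrivial_iff_two_le.mpr hn
  obtain ⟨j, hjr⟩ := exists_ne r
  refine contractibleSpace_quot_collapseRel (A := {x | x r = 0 ∨ ∃ i, x i = 1}) (raiseCoord j)
    (raiseCoord_zero j) (fun x => Or.inr ⟨j, raiseCoord_one_apply_self j x⟩) ?_
  rintro t x (hx | ⟨i, hi⟩)
  · exact Or.inl ((raiseCoord_apply_of_ne hjr.symm t x).trans hx)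
  · exact Or.inr ⟨i, le_antisymm le_one' (hi ▸ le_raiseCoord j t x i)⟩
end
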